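/- arXiv:2003.10640 — 3 statements merged into one kernel-verified Lean document; each statement's English description precedes it below -/
import Mathlib

section
/- For every n ≥ 2, the number of 123-avoiding permutations of length n with a unique longest increasing subsequence equals n − 1 (and u_1(123) = 1). Equivalently, for n ≥ 2, a 123-avoiding permutation of length n has a ULIS if and only if it has exactly one non-inversion, i.e., exactly one pair of positions i < j with p(i) < p(j). -/
/-- `s` is the index set of an increasing subsequence of the word `f`. -/
def IsIncSubseq {n : ℕ} {α : Type*} [Preorder α] (f : Fin n → α) (s : Finset (Fin n)) : Prop :=
  ∀ i ∈ s, ∀ j ∈ s, i < j → f i < f j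

/-- `f` has a unique longest increasing subsequence. -/
def HasULIS {n : ℕ} {α : Type*} [Preorder α] (f : Fin n → α) : Prop :=
  ∃! s : Finset (Fin n), IsIncSubseq f s ∧
    ∀ t : Finset (Fin n), IsIncSubseq f t → t.card ≤ s.card

/-- `p` contains the pattern `q`. -/
def Contains {k n : ℕ} (q : Equiv.Perm (Fin k)) (p : Equiv.Perm (Fin n)) : Prop :=
  ∃ f : Fin k → Fin n, StrictMono f ∧ ∀ a b : Fin k, p (f a) < p (f b) ↔ q a < q b

/-- `p` avoids the pattern `q`. -/
def Avoids {k n : ℕ} (q : Equiv.Perm (Fin k)) (p : Equiv.Perm (Fin n)) : Prop :=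
  ¬ Contains q p

def pattern321 : Equiv.Perm (Fin 3) := ⟨![2,1,0], ![2,1,0], by decide, by decide⟩
def pattern231 : Equiv.Perm (Fin 3) := ⟨![1,2,0], ![2,0,1], by decide, by decide⟩
def pattern132 : Equiv.Perm (Fin 3) := ⟨![0,2,1], ![0,2,1], by decide, by decide⟩
def pattern123 : Equiv.Perm (Fin 3) := Equiv.refl (Fin 3)

/-- the number of `q`-avoiding permutations of length `n` with a unique
longest increasing subsequence. -/
noncomputable def uNum {k : ℕ} (q : Equiv.Perm (Fin k)) (n : ℕ) : ℕ :=
  Nat.card {p : Equiv.Perm (Fin n) // Avoids q p ∧ HasULIS ⇑p}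

/-- the number of `q`-avoiding involutions of length `n` with a unique
longest increasing subsequence. -/
noncomputable def iNum {k : ℕ} (q : Equiv.Perm (Fin k)) (n : ℕ) : ℕ :=
  Nat.card {p : Equiv.Perm (Fin n) // p⁻¹ = p ∧ Avoids q p ∧ HasULIS ⇑p}

/-- A permutation is indecomposable if it cannot be cut into a (nonempty) prefix and
a (nonempty) suffix so that every entry of the prefix is smaller than every entry
of the suffix. -/
def Indecomposable {m : ℕ} (w : Equiv.Perm (Fin m)) : Prop :=
  ¬ ∃ j : ℕ, 1 ≤ j ∧ j < m ∧ ∀ a b : Fin m, (a : ℕ) < j → j ≤ (b : ℕ) → w a < w b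

section ULISAux

open Finset Equiv

lemma fin_strictMono_eq_id {n : ℕ} {f : Fin n → Fin n} (hf : StrictMono f) (x : Fin n) :
    f x = x := by
  haveI : WellFoundedLT (Fin n) := inferInstance
  haveI : WellFoundedGT (Fin n) := inferInstance
  exact le_antisymm hf.apply_le hf.le_apply

lemma card_le_two_of_avoids {n : ℕ} {p : Equiv.Perm (Fin n)} (h : Avoids pattern123 p)
    {s : Finset (Fin n)} (hs : IsIncSubseq ⇑p s) : s.card ≤ 2 := by
  by_contra hc
  push_neg at hc
  obtain ⟨t, hts, ht⟩ := Finset.exists_subset_card_eq (show 3 ≤ s.card from hc)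
  set e := t.orderIsoOfFin ht with he
  have hmono : StrictMono (fun i : Fin 3 => (e i : Fin n)) := by
    intro a b hab
    exact Subtype.coe_lt_coe.2 (e.strictMono hab)
  have hval : ∀ a b : Fin 3, a < b → p ((e a : Fin n)) < p ((e b : Fin n)) := by
    intro a b hab
    exact hs _ (hts (e a).2) _ (hts (e b).2) (hmono hab)
  refine h ⟨fun i => (e i : Fin n), hmono, ?_⟩
  intro a b
  simp only [pattern123, Equiv.refl_apply]
  constructor
  · intro hlt
    rcases lt_trichotomy a b with h' | h' | h'
    · exact h'
    · exact absurd hlt (h' ▸ lt_irrefl _)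
    · exact absurd hlt (asymm (hval b a h'))
  · exact hval a b

lemma avoids_of_uni {n : ℕ} {p : Equiv.Perm (Fin n)}
    (h : ∃! ij : Fin n × Fin n, ij.1 < ij.2 ∧ p ij.1 < p ij.2) : Avoids pattern123 p := by
  rintro ⟨f, hfm, hf⟩
  obtain ⟨ij, -, huniq⟩ := h
  have h01 : p (f 0) < p (f 1) := (hf 0 1).2 (by decide)
  have h02 : p (f 0) < p (f 2) := (hf 0 2).2 (by decide)
  have e1 := huniq (f 0, f 1) ⟨hfm (by decide), h01⟩
  have e2 := huniq (f 0, f 2) ⟨hfm (by decide), h02⟩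
  have h12 : f 1 = f 2 := congrArg Prod.snd (e1.trans e2.symm)
  exact absurd h12 (ne_of_lt (hfm (by decide)))

lemma inc_singleton {n : ℕ} (p : Equiv.Perm (Fin n)) (i : Fin n) :
    IsIncSubseq ⇑p {i} := by
  intro a ha b hb hab
  simp only [Finset.mem_singleton] at ha hb
  subst ha; subst hb
  exact absurd hab (lt_irrefl _)

lemma inc_pair {n : ℕ} {p : Equiv.Perm (Fin n)} {i j : Fin n} (hij : i < j)
    (hp : p i < p j) : IsIncSubseq ⇑p {i, j} := by
  intro a ha b hb hab
  simp only [Finset.mem_insert, Finset.mem_singleton] at ha hb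
  rcases ha with rfl | rfl <;> rcases hb with rfl | rfl
  · exact absurd hab (lt_irrefl _)
  · exact hp
  · exact absurd hab (asymm hij)
  · exact absurd hab (lt_irrefl _)

lemma pair_eq_extract {n : ℕ} {a b x y : Fin n} (hab : a < b) (hxy : x < y)
    (h : ({x, y} : Finset (Fin n)) = {a, b}) : x = a ∧ y = b := by
  have hx : x ∈ ({a, b} : Finset (Fin n)) := by rw [← h]; simp
  have hy : y ∈ ({a, b} : Finset (Fin n)) := by rw [← h]; simp
  simp only [Finset.mem_insert, Finset.mem_singleton] at hx hy
  rcases hx with rfl | rfl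
  · rcases hy with rfl | rfl
    · exact absurd hxy (lt_irrefl _)
    · exact ⟨rfl, rfl⟩
  · rcases hy with rfl | rfl
    · exact absurd hxy (asymm hab)
    · exact absurd hxy (lt_irrefl _)

lemma ulis_iff_uni {n : ℕ} (hn : 2 ≤ n) {p : Equiv.Perm (Fin n)} (hav : Avoids pattern123 p) :
    HasULIS ⇑p ↔ ∃! ij : Fin n × Fin n, ij.1 < ij.2 ∧ p ij.1 < p ij.2 := by
  constructor
  · rintro ⟨s, ⟨hsinc, hsmax⟩, huniq⟩
    have hc1 : 1 ≤ s.card := by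
      have := hsmax {⟨0, by omega⟩} (inc_singleton p _)
      simpa using this
    have hc2 : 2 ≤ s.card := by
      by_contra hh
      push_neg at hh
      have hall : ∀ i : Fin n, ({i} : Finset (Fin n)) = s := by
        intro i
        refine huniq {i} ⟨inc_singleton p i, fun t ht => ?_⟩
        have := hsmax t ht
        simp only [Finset.card_singleton]
        omega
      have h01 := (hall ⟨0, by omega⟩).trans (hall ⟨1, by omega⟩).symm
      rw [Finset.singleton_inj] at h01
      exact absurd (congrArg Fin.val h01) (by simp)
    have hcard : s.card = 2 := le_antisymm (card_le_two_of_avoids hav hsinc) hc2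
    obtain ⟨i, j, hij_ne, rfl⟩ := Finset.card_eq_two.1 hcard
    obtain ⟨a, b, hab, hsab⟩ : ∃ a b : Fin n, a < b ∧ ({i, j} : Finset (Fin n)) = {a, b} := by
      rcases lt_or_gt_of_ne hij_ne with h' | h'
      · exact ⟨i, j, h', rfl⟩
      · exact ⟨j, i, h', Finset.pair_comm i j⟩
    have hp : p a < p b := by
      refine hsinc a ?_ b ?_ hab <;> rw [hsab] <;> simp
    refine ⟨(a, b), ⟨hab, hp⟩, ?_⟩
    rintro ⟨x, y⟩ ⟨hxy, hpxy⟩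
    have hteq : ({x, y} : Finset (Fin n)) = {i, j} := by
      refine huniq {x, y} ⟨inc_pair hxy hpxy, fun t ht => ?_⟩
      rw [Finset.card_pair (ne_of_lt hxy)]
      exact card_le_two_of_avoids hav ht
    obtain ⟨hxa, hyb⟩ := pair_eq_extract hab hxy (hteq.trans hsab)
    simp only [Prod.mk.injEq]
    exact ⟨hxa, hyb⟩
  · rintro ⟨⟨i, j⟩, ⟨hij, hp⟩, huniq⟩
    refine ⟨{i, j}, ⟨inc_pair hij hp, fun t ht => ?_⟩, ?_⟩
    · rw [Finset.card_pair (ne_of_lt hij)]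
      exact card_le_two_of_avoids hav ht
    · rintro s ⟨hsinc, hsmax⟩
      have h2 : s.card ≤ 2 := card_le_two_of_avoids hav hsinc
      have h2' : 2 ≤ s.card := by
        have := hsmax {i, j} (inc_pair hij hp)
        rwa [Finset.card_pair (ne_of_lt hij)] at this
      obtain ⟨a, b, hne, rfl⟩ := Finset.card_eq_two.1 (le_antisymm h2 h2')
      obtain ⟨x, y, hxy, heq⟩ : ∃ x y : Fin n, x < y ∧ ({a, b} : Finset (Fin n)) = {x, y} := by
        rcases lt_or_gt_of_ne hne with h' | h'
        · exact ⟨a, b, h', rfl⟩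
        · exact ⟨b, a, h', Finset.pair_comm a b⟩
      have hpxy : p x < p y := by
        refine hsinc x ?_ y ?_ hxy <;> rw [heq] <;> simp
      have hxyij := huniq (x, y) ⟨hxy, hpxy⟩
      rw [Prod.ext_iff] at hxyij
      have hx1 : x = i := hxyij.1
      have hy1 : y = j := hxyij.2
      rw [heq, hx1, hy1]

def wperm {n : ℕ} (k : ℕ) (hk : k + 1 < n) : Equiv.Perm (Fin n) :=
  (Equiv.swap ⟨k, by omega⟩ ⟨k + 1, hk⟩).trans Fin.revPerm

lemma wperm_val {n : ℕ} (k : ℕ) (hk : k + 1 < n) (x : Fin n) :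
    (wperm k hk x : ℕ) =
      n - 1 - (if (x : ℕ) = k then k + 1 else if (x : ℕ) = k + 1 then k else (x : ℕ)) := by
  simp only [wperm, Equiv.trans_apply, Fin.revPerm_apply, Fin.val_rev, Equiv.swap_apply_def,
    Fin.ext_iff, apply_ite Fin.val, Fin.val_mk]
  have := x.isLt
  split_ifs <;> omega

lemma wperm_lt_iff {n : ℕ} (k : ℕ) (hk : k + 1 < n) {i j : Fin n} (hij : i < j) :
    (wperm k hk i < wperm k hk j ↔ i = ⟨k, by omega⟩ ∧ j = ⟨k + 1, hk⟩) := by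
  have hi := i.isLt
  have hjlt := j.isLt
  have hijv : (i : ℕ) < j := hij
  rw [Fin.lt_def, wperm_val, wperm_val]
  simp only [Fin.ext_iff, Fin.val_mk]
  split_ifs <;> omega

lemma wperm_uni {n : ℕ} (k : ℕ) (hk : k + 1 < n) :
    ∃! ij : Fin n × Fin n, ij.1 < ij.2 ∧ wperm k hk ij.1 < wperm k hk ij.2 := by
  have hab : (⟨k, by omega⟩ : Fin n) < ⟨k + 1, hk⟩ := by simp [Fin.lt_def]
  refine ⟨(⟨k, by omega⟩, ⟨k + 1, hk⟩), ⟨hab, (wperm_lt_iff k hk hab).2 ⟨rfl, rfl⟩⟩, ?_⟩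
  rintro ⟨i, j⟩ ⟨hij, hp⟩
  obtain ⟨h1, h2⟩ := (wperm_lt_iff k hk hij).1 hp
  simp only [Prod.mk.injEq]
  exact ⟨h1, h2⟩

lemma uni_wperm {n : ℕ} {p : Equiv.Perm (Fin n)}
    (h : ∃! ij : Fin n × Fin n, ij.1 < ij.2 ∧ p ij.1 < p ij.2) :
    ∃ (k : ℕ) (hk : k + 1 < n), p = wperm k hk := by
  obtain ⟨⟨i, j⟩, ⟨hij, hp⟩, huniq⟩ := h
  have hijv : (i : ℕ) < j := hij
  have hj : (j : ℕ) = (i : ℕ) + 1 := by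
    by_contra hne
    have h1 : (i : ℕ) + 1 < j := by omega
    set m : Fin n := ⟨(i : ℕ) + 1, by omega⟩ with hm
    have him : i < m := by simp [Fin.lt_def, hm]
    have hmj : m < j := by simp only [Fin.lt_def, hm]; omega
    rcases lt_trichotomy (p i) (p m) with h' | h' | h'
    · have he := huniq (i, m) ⟨him, h'⟩
      have : m = j := congrArg Prod.snd he
      have := congrArg Fin.val this
      simp [hm] at this
      omega
    · exact absurd (p.injective h') (ne_of_lt him)
    · have he := huniq (m, j) ⟨hmj, lt_trans h' hp⟩
      have : m = i := congrArg Prod.fst he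
      have := congrArg Fin.val this
      simp [hm] at this
  have hinv : ∀ a b : Fin n, a < b → (a ≠ i ∨ b ≠ j) → p b < p a := by
    intro a b hab hne
    rcases lt_trichotomy (p a) (p b) with h' | h' | h'
    · have he := huniq (a, b) ⟨hab, h'⟩
      rw [Prod.ext_iff] at he
      rcases hne with hne | hne
      · exact absurd he.1 hne
      · exact absurd he.2 hne
    · exact absurd (p.injective h') (ne_of_lt hab)
    · exact h'
  have hk : (i : ℕ) + 1 < n := by rw [← hj]; exact j.isLt
  refine ⟨(i : ℕ), hk, ?_⟩
  have hanti : StrictAnti (fun x => p (Equiv.swap i j x)) := by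
    intro a b hab
    simp only
    by_cases hai : a = i
    · subst hai
      by_cases hbj : b = j
      · subst hbj
        rw [Equiv.swap_apply_left, Equiv.swap_apply_right]
        exact hp
      · have hbi : b ≠ a := ne_of_gt hab
        rw [Equiv.swap_apply_left, Equiv.swap_apply_of_ne_of_ne hbi hbj]
        have hb1 : (b : ℕ) ≠ j := fun hh => hbj (Fin.ext hh)
        have hb2 : (a : ℕ) < b := hab
        have hjb : j < b := by rw [Fin.lt_def]; omega
        have hji : j ≠ a := by rw [Ne, Fin.ext_iff]; omega
        exact hinv j b hjb (Or.inl hji)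
    · by_cases haj : a = j
      · subst haj
        have hbj : b ≠ a := ne_of_gt hab
        have hib : i < b := lt_trans hij hab
        have hbi : b ≠ i := ne_of_gt hib
        rw [Equiv.swap_apply_right, Equiv.swap_apply_of_ne_of_ne hbi hbj]
        exact hinv i b hib (Or.inr hbj)
      · by_cases hbi : b = i
        · subst hbi
          have haj2 : a < j := lt_trans hab hij
          have haj3 : a ≠ j := ne_of_lt haj2
          rw [Equiv.swap_apply_left, Equiv.swap_apply_of_ne_of_ne hai haj3]
          exact hinv a j haj2 (Or.inl hai)
        · by_cases hbj : b = j
          · subst hbj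
            have hav : (a : ℕ) < b := hab
            have ha1 : (a : ℕ) ≠ i := fun hh => hai (Fin.ext hh)
            have hai2 : a < i := by rw [Fin.lt_def]; omega
            rw [Equiv.swap_apply_right, Equiv.swap_apply_of_ne_of_ne hai haj]
            exact hinv a i hai2 (Or.inl hai)
          · rw [Equiv.swap_apply_of_ne_of_ne hai haj, Equiv.swap_apply_of_ne_of_ne hbi hbj]
            exact hinv a b hab (Or.inl hai)
  have hmono : StrictMono (fun x : Fin n => (p (Equiv.swap i j x)).rev) := by
    intro x y hxy
    exact Fin.rev_lt_rev.2 (hanti hxy)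
  have hqrev : ∀ x : Fin n, p (Equiv.swap i j x) = x.rev := by
    intro x
    have hx := fin_strictMono_eq_id hmono x
    calc p (Equiv.swap i j x) = (p (Equiv.swap i j x)).rev.rev := (Fin.rev_rev _).symm
      _ = x.rev := by rw [hx]
  apply Equiv.ext
  intro x
  have hx : p x = (Equiv.swap i j x).rev := by
    conv_lhs => rw [show x = Equiv.swap i j (Equiv.swap i j x) from
      (Equiv.swap_apply_self i j x).symm]
    exact hqrev _
  apply Fin.ext
  rw [hx, wperm_val, Fin.val_rev, Equiv.swap_apply_def]
  have hxlt := x.isLt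
  have hilt := i.isLt
  simp only [Fin.ext_iff, apply_ite Fin.val]
  split_ifs <;> omega

lemma wperm_inj {n : ℕ} {k k' : ℕ} (hk : k + 1 < n) (hk' : k' + 1 < n)
    (h : wperm (n := n) k hk = wperm k' hk') : k = k' := by
  have hab : (⟨k', by omega⟩ : Fin n) < ⟨k' + 1, hk'⟩ := by simp [Fin.lt_def]
  have h2 : wperm k hk (⟨k', by omega⟩ : Fin n) < wperm k hk ⟨k' + 1, hk'⟩ := by
    rw [h]; exact (wperm_lt_iff k' hk' hab).2 ⟨rfl, rfl⟩
  have h3 := ((wperm_lt_iff k hk hab).1 h2).1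
  have := congrArg Fin.val h3
  simpa using this.symm

lemma count_uni {n : ℕ} (hn : 2 ≤ n) :
    Nat.card {p : Equiv.Perm (Fin n) // Avoids pattern123 p ∧ HasULIS ⇑p} = n - 1 := by
  have key : ∀ p : Equiv.Perm (Fin n),
      (Avoids pattern123 p ∧ HasULIS ⇑p) ↔
        (∃! ij : Fin n × Fin n, ij.1 < ij.2 ∧ p ij.1 < p ij.2) := by
    intro p
    constructor
    · rintro ⟨hav, hul⟩
      exact (ulis_iff_uni hn hav).1 hul
    · intro h
      exact ⟨avoids_of_uni h, (ulis_iff_uni hn (avoids_of_uni h)).2 h⟩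
  let e : Fin (n - 1) → {p : Equiv.Perm (Fin n) // Avoids pattern123 p ∧ HasULIS ⇑p} :=
    fun k => ⟨wperm k.val (by have := k.isLt; omega), (key _).2 (wperm_uni _ _)⟩
  have hbij : Function.Bijective e := by
    constructor
    · intro k k' hkk
      have : wperm (n := n) k.val _ = wperm k'.val _ := congrArg Subtype.val hkk
      exact Fin.ext (wperm_inj _ _ this)
    · rintro ⟨p, hp⟩
      obtain ⟨k, hk, rfl⟩ := uni_wperm ((key p).1 hp)
      exact ⟨⟨k, by omega⟩, rfl⟩
  calc Nat.card {p : Equiv.Perm (Fin n) // Avoids pattern123 p ∧ HasULIS ⇑p}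
      = Nat.card (Fin (n - 1)) := Nat.card_congr (Equiv.ofBijective e hbij).symm
    _ = n - 1 := by simp

lemma uNum_one : Nat.card {p : Equiv.Perm (Fin 1) // Avoids pattern123 p ∧ HasULIS ⇑p} = 1 := by
  rw [Nat.card_eq_one_iff_unique]
  constructor
  · constructor
    intro x y
    exact Subtype.ext (Subsingleton.elim _ _)
  · refine ⟨⟨1, ?_, ?_⟩⟩
    · rintro ⟨f, hf, -⟩
      have h01 := hf (show (0 : Fin 3) < 1 by decide)
      rw [Fin.lt_def] at h01
      have := (f 0).isLt
      have := (f 1).isLt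
      omega
    · refine ⟨{0}, ⟨?_, ?_⟩, ?_⟩
      · intro a ha b hb hab
        have : a = b := Subsingleton.elim a b
        exact absurd hab (this ▸ lt_irrefl _)
      · intro t ht
        calc t.card ≤ Finset.univ.card := Finset.card_le_univ t
          _ = ({0} : Finset (Fin 1)).card := by simp
      · rintro s ⟨-, hmax⟩
        have h1 : 1 ≤ s.card := by
          have := hmax {0} (by
            intro a ha b hb hab
            have : a = b := Subsingleton.elim a b
            exact absurd hab (this ▸ lt_irrefl _))
          simpa using this
        have h2 : s.card ≤ 1 := by
          calc s.card ≤ Finset.univ.card := Finset.card_le_univ s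
            _ = 1 := by simp
        have : s = Finset.univ := Finset.eq_univ_of_card s (by simp; omega)
        rw [this]
        decide

end ULISAux

/-- `u_1(123) = 1` and, for `n ≥ 2`, `u_n(123) = n − 1`; equivalently, for `n ≥ 2`
a 123-avoiding permutation of length `n` has a ULIS if and only if it has exactly one
non-inversion, i.e. exactly one pair of positions `i < j` with `p(i) < p(j)`. -/
theorem u123_eq_n_sub_one :
    uNum pattern123 1 = 1 ∧
    (∀ n : ℕ, 2 ≤ n → uNum pattern123 n = n - 1) ∧
    (∀ n : ℕ, 2 ≤ n → ∀ p : Equiv.Perm (Fin n), Avoids pattern123 p →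
      (HasULIS ⇑p ↔ ∃! ij : Fin n × Fin n, ij.1 < ij.2 ∧ p ij.1 < p ij.2)) := by
  refine ⟨uNum_one, fun n hn => count_uni hn, fun n hn p hav => ulis_iff_uni hn hav⟩
end

section
/- Let i_n(123) be the number of 123-avoiding involutions of length n with a unique longest increasing subsequence. Then i_1(123) = 1, i_n(123) = 1 whenever n ≥ 2 is even, and i_n(123) = 0 whenever n ≥ 3 is odd. -/
/-!
A 123-avoiding permutation has no increasing subsequence of length three. As soon as it has a
non-inversion (positions `i < j` with `p i < p j`), its longest increasing subsequences are
exactly its non-inversions, so having a ULIS means having a unique non-inversion `(a, b)` (for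
`n ≥ 2` there must be one, or all singletons would be longest).
Uniqueness forces `b = a + 1`, and since a permutation is determined by which pairs it keeps in
order, `p` is the reversal composed with the transposition `(a b)`. This permutation is an
involution exactly when the reversal exchanges `a` and `a + 1`, i.e. when `n = 2a + 2`.
-/

section IncreasingSubsequences

variable {n : ℕ} {α : Type*}

theorem isIncSubseq_pair [Preorder α] {f : Fin n → α} {a b : Fin n} (hab : a < b)
    (hf : f a < f b) : IsIncSubseq f {a, b} := by
  intro i hi j hj hij
  simp only [Finset.mem_insert, Finset.mem_singleton] at hi hj
  rcases hi with rfl | rfl <;> rcases hj with rfl | rfl <;> first | exact hf | order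

theorem IsIncSubseq.exists_eq_pair [Preorder α] {f : Fin n → α} {s : Finset (Fin n)}
    (hs : IsIncSubseq f s) (h2 : s.card = 2) :
    ∃ a b, a < b ∧ f a < f b ∧ s = {a, b} := by
  obtain ⟨a, b, hne, rfl⟩ := Finset.card_eq_two.mp h2
  rcases hne.lt_or_gt with hab | hba
  · exact ⟨a, b, hab, hs a (by simp) b (by simp) hab, rfl⟩
  · exact ⟨b, a, hba, hs b (by simp) a (by simp) hba, Finset.pair_comm a b⟩

theorem IsIncSubseq.contains_refl {k : ℕ} {p : Equiv.Perm (Fin n)} {t : Finset (Fin n)}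
    (ht : IsIncSubseq p t) (hk : k ≤ t.card) : Contains (Equiv.refl (Fin k)) p := by
  obtain ⟨u, hut, hu⟩ := Finset.exists_subset_card_eq hk
  let e := u.orderEmbOfFin hu
  have hmem (a : Fin k) : e a ∈ t := hut (u.orderEmbOfFin_mem hu a)
  have hpe : StrictMono (p ∘ e) := fun a b hab => ht _ (hmem a) _ (hmem b) (e.strictMono hab)
  exact ⟨e, e.strictMono, fun a b => hpe.lt_iff_lt⟩

theorem IsIncSubseq.card_le_two_of_avoids123 {p : Equiv.Perm (Fin n)} {t : Finset (Fin n)}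
    (hav : Avoids pattern123 p) (ht : IsIncSubseq p t) : t.card ≤ 2 := by
  by_contra! h
  exact hav (ht.contains_refl h)

theorem avoids_of_lt {k : ℕ} (q : Equiv.Perm (Fin k)) (p : Equiv.Perm (Fin n)) (hnk : n < k) :
    Avoids q p := by
  rintro ⟨f, hf, -⟩
  have := Fintype.card_le_of_injective f hf.injective
  simp only [Fintype.card_fin] at this
  omega

theorem hasULIS_of_strictMono [Preorder α] {f : Fin n → α} (hf : StrictMono f) :
    HasULIS f := by
  have huniv : IsIncSubseq f Finset.univ := fun i _ j _ hij => hf hij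
  refine ⟨Finset.univ, ⟨huniv, fun t _ => Finset.card_le_univ t⟩, ?_⟩
  rintro s ⟨-, hs⟩
  exact Finset.eq_univ_of_card s ((Finset.card_le_univ s).antisymm (hs _ huniv))

theorem HasULIS.exists_lt [Preorder α] {f : Fin n → α} (hf : HasULIS f) (hn : 2 ≤ n) :
    ∃ a b, a < b ∧ f a < f b := by
  by_contra! hno
  have hle : ∀ t, IsIncSubseq f t → t.card ≤ 1 := fun t ht =>
    Finset.card_le_one.mpr fun i hi j hj => by
      by_contra hij
      rcases Ne.lt_or_gt hij with h | h
      · exact hno i j h (ht i hi j hj h)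
      · exact hno j i h (ht j hj i hi h)
  have hsingle (i : Fin n) : IsIncSubseq f {i} := by
    intro a ha b hb hab
    simp only [Finset.mem_singleton] at ha hb
    exact absurd (ha.trans hb.symm) hab.ne
  have hlongest (i : Fin n) :
      IsIncSubseq f {i} ∧ ∀ t, IsIncSubseq f t → t.card ≤ ({i} : Finset (Fin n)).card :=
    ⟨hsingle i, fun t ht => (hle t ht).trans_eq (Finset.card_singleton i).symm⟩
  have h01 := hf.unique (hlongest ⟨0, by omega⟩) (hlongest ⟨1, by omega⟩)
  simp [Finset.singleton_inj, Fin.ext_iff] at h01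

end IncreasingSubsequences

theorem Finset.eq_and_eq_of_pair_eq_pair {α : Type*} [LinearOrder α] {a b c d : α}
    (hab : a < b) (hcd : c < d) (h : ({a, b} : Finset α) = {c, d}) : a = c ∧ b = d := by
  have ha : a ∈ ({c, d} : Finset α) := by simp [← h]
  have hb : b ∈ ({c, d} : Finset α) := by simp [← h]
  simp only [Finset.mem_insert, Finset.mem_singleton] at ha hb
  rcases ha with rfl | rfl <;> rcases hb with rfl | rfl <;> first | exact ⟨rfl, rfl⟩ | order

section UniqueNoninversion

variable {n : ℕ} {α : Type*}

def IsUniqueNoninversion [Preorder α] (f : Fin n → α) (a b : Fin n) : Prop :=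
  a < b ∧ ∀ i j, i < j → (f i < f j ↔ i = a ∧ j = b)

theorem hasULIS_iff_exists_isUniqueNoninversion [Preorder α] {f : Fin n → α}
    (hle : ∀ t, IsIncSubseq f t → t.card ≤ 2) (hex : ∃ a b, a < b ∧ f a < f b) :
    HasULIS f ↔ ∃ a b, IsUniqueNoninversion f a b := by
  obtain ⟨a₀, b₀, hab₀, hf₀⟩ := hex
  have hlongest (s : Finset (Fin n)) :
      (IsIncSubseq f s ∧ ∀ t, IsIncSubseq f t → t.card ≤ s.card) ↔
        IsIncSubseq f s ∧ s.card = 2 := by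
    refine and_congr_right fun hs =>
      ⟨fun hmax => (hle s hs).antisymm ?_, fun h2 t ht => h2 ▸ hle t ht⟩
    simpa [Finset.card_pair hab₀.ne] using hmax _ (isIncSubseq_pair hab₀ hf₀)
  simp only [HasULIS, hlongest]
  constructor
  · rintro ⟨s, ⟨hs, hs2⟩, huniq⟩
    obtain ⟨a, b, hab, hfab, rfl⟩ := hs.exists_eq_pair hs2
    refine ⟨a, b, hab, fun i j hij => ⟨fun hfij => ?_, ?_⟩⟩
    · exact Finset.eq_and_eq_of_pair_eq_pair hij hab
        (huniq _ ⟨isIncSubseq_pair hij hfij, Finset.card_pair hij.ne⟩)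
    · rintro ⟨rfl, rfl⟩
      exact hfab
  · rintro ⟨a, b, hab, honly⟩
    have hfab : f a < f b := (honly a b hab).mpr ⟨rfl, rfl⟩
    refine ⟨{a, b}, ⟨isIncSubseq_pair hab hfab, Finset.card_pair hab.ne⟩, ?_⟩
    rintro s ⟨hs, hs2⟩
    obtain ⟨c, d, hcd, hfcd, rfl⟩ := hs.exists_eq_pair hs2
    obtain ⟨rfl, rfl⟩ := (honly c d hcd).mp hfcd
    rfl

theorem IsUniqueNoninversion.avoids123 {p : Equiv.Perm (Fin n)} {a b : Fin n}
    (h : IsUniqueNoninversion p a b) : Avoids pattern123 p := by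
  rintro ⟨f, hf, hpf⟩
  have h01 := (h.2 (f 0) (f 1) (hf (by decide))).mp ((hpf 0 1).mpr (by decide))
  have h12 := (h.2 (f 1) (f 2) (hf (by decide))).mp ((hpf 1 2).mpr (by decide))
  exact h.1.ne (h12.1.symm.trans h01.2)

theorem avoids123_and_hasULIS_iff {p : Equiv.Perm (Fin n)} (hn : 2 ≤ n) :
    Avoids pattern123 p ∧ HasULIS p ↔ ∃ a b, IsUniqueNoninversion p a b := by
  constructor
  · rintro ⟨hav, hu⟩
    exact (hasULIS_iff_exists_isUniqueNoninversion (fun t ht => ht.card_le_two_of_avoids123 hav)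
      (hu.exists_lt hn)).mp hu
  · rintro ⟨a, b, h⟩
    have hav := h.avoids123
    have hex : ∃ a b, a < b ∧ p a < p b := ⟨a, b, h.1, (h.2 a b h.1).mpr ⟨rfl, rfl⟩⟩
    exact ⟨hav, (hasULIS_iff_exists_isUniqueNoninversion
      (fun t ht => ht.card_le_two_of_avoids123 hav) hex).mpr ⟨a, b, h⟩⟩

end UniqueNoninversion

theorem Equiv.Perm.eq_of_lt_iff_lt {α : Type*} [LinearOrder α] [WellFoundedLT α]
    {p q : Equiv.Perm α} (h : ∀ i j, i < j → (p i < p j ↔ q i < q j)) : p = q := by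
  have hall (i j : α) : p i < p j ↔ q i < q j := by
    rcases lt_trichotomy i j with hij | rfl | hji
    · exact h i j hij
    · simp
    · rw [← not_iff_not, not_lt, not_lt, le_iff_lt_or_eq, le_iff_lt_or_eq, h j i hji,
        p.injective.eq_iff, q.injective.eq_iff]
  have hmono : StrictMono (q ∘ p.symm) := fun x y hxy => by
    simpa [← hall] using hxy
  have hid := Subsingleton.elim
    (hmono.orderIsoOfSurjective _ (q.surjective.comp p.symm.surjective)) (OrderIso.refl α)
  ext i
  simpa using (congrArg (fun e : α ≃o α => e (p i)) hid).symm

section RevSwap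

variable {n : ℕ}

theorem swap_lt_swap_iff_of_val_eq_succ {a b i j : Fin n} (hb : (b : ℕ) = a + 1)
    (hij : i < j) :
    Equiv.swap a b j < Equiv.swap a b i ↔ i = a ∧ j = b := by
  rw [Fin.lt_def] at hij
  simp only [Equiv.swap_apply_def, Fin.ext_iff, Fin.lt_def]
  split_ifs <;> omega

theorem isUniqueNoninversion_revPerm_mul_swap {a b : Fin n} (hb : (b : ℕ) = a + 1) :
    IsUniqueNoninversion ⇑(Fin.revPerm * Equiv.swap a b : Equiv.Perm (Fin n)) a b := by
  refine ⟨Fin.lt_def.mpr (by omega), fun i j hij => ?_⟩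
  simpa only [Equiv.Perm.mul_apply, Fin.revPerm_apply, Fin.rev_lt_rev]
    using swap_lt_swap_iff_of_val_eq_succ hb hij

theorem IsUniqueNoninversion.val_eq_succ {p : Equiv.Perm (Fin n)} {a b : Fin n}
    (h : IsUniqueNoninversion p a b) : (b : ℕ) = a + 1 := by
  by_contra hne
  have hab := Fin.lt_def.mp h.1
  let c : Fin n := ⟨a + 1, by omega⟩
  have hac : a < c := Fin.lt_def.mpr (by simp [c])
  have hcb : c < b := Fin.lt_def.mpr (by simp only [c]; omega)
  have hca : p c < p a := by
    refine (p.injective.ne hac.ne').lt_of_le (not_lt.mp fun hlt => hcb.ne ?_)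
    exact ((h.2 a c hac).mp hlt).2
  have hbc : p b < p c := by
    refine (p.injective.ne hcb.ne').lt_of_le (not_lt.mp fun hlt => hac.ne' ?_)
    exact ((h.2 c b hcb).mp hlt).1
  exact (hbc.trans hca).not_gt ((h.2 a b h.1).mpr ⟨rfl, rfl⟩)

theorem IsUniqueNoninversion.eq_revPerm_mul_swap {p : Equiv.Perm (Fin n)} {a b : Fin n}
    (h : IsUniqueNoninversion p a b) : p = Fin.revPerm * Equiv.swap a b :=
  Equiv.Perm.eq_of_lt_iff_lt fun i j hij =>
    (h.2 i j hij).trans ((isUniqueNoninversion_revPerm_mul_swap h.val_eq_succ).2 i j hij).symm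

theorem revPerm_mul_swap_inv_eq_self_iff {a b : Fin n} (hb : (b : ℕ) = a + 1) :
    (Fin.revPerm * Equiv.swap a b : Equiv.Perm (Fin n))⁻¹ = Fin.revPerm * Equiv.swap a b ↔
      n = 2 * a + 2 := by
  constructor
  · intro hinv
    have hfix := (Fin.revPerm * Equiv.swap a b).symm_apply_apply a
    rw [← Equiv.Perm.inv_def, hinv] at hfix
    simp only [Equiv.Perm.mul_apply, Equiv.swap_apply_left, Fin.revPerm_apply] at hfix
    rw [Equiv.swap_apply_def] at hfix
    split_ifs at hfix <;> simp only [Fin.ext_iff, Fin.val_rev] at * <;> omega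
  · intro hn
    have hrev (x y : Fin n) (hxy : (x : ℕ) + y + 1 = n) : Fin.rev x = y :=
      Fin.ext (by rw [Fin.val_rev]; omega)
    -- conjugating by the reversal fixes `swap a b`, since the reversal exchanges `a` and `b`
    have hcomm : Fin.revPerm * Equiv.swap a b = Equiv.swap a b * Fin.revPerm := by
      rw [← mul_inv_eq_iff_eq_mul, ← Equiv.swap_apply_apply, Fin.revPerm_apply,
        Fin.revPerm_apply, hrev a b (by omega), hrev b a (by omega), Equiv.swap_comm]
    rw [mul_inv_rev, Equiv.swap_inv, hcomm, Equiv.Perm.inv_def, Fin.revPerm_symm]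

end RevSwap

theorem iNum_one {k : ℕ} (q : Equiv.Perm (Fin k)) (hk : 1 < k) : iNum q 1 = 1 := by
  rw [iNum, Nat.card_eq_one_iff_exists]
  refine ⟨⟨1, inv_one, avoids_of_lt q 1 hk, hasULIS_of_strictMono ?_⟩, fun p => ?_⟩
  · exact Fin.strictMono_iff_lt_succ.mpr finZeroElim
  · exact Subtype.ext (Subsingleton.elim _ _)

theorem involution_avoids123_hasULIS_iff {n : ℕ} (hn : 2 ≤ n) {p : Equiv.Perm (Fin n)} :
    p⁻¹ = p ∧ Avoids pattern123 p ∧ HasULIS p ↔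
      ∃ a b : Fin n, (b : ℕ) = a + 1 ∧ n = 2 * a + 2 ∧
        p = Fin.revPerm * Equiv.swap a b := by
  rw [avoids123_and_hasULIS_iff hn]
  constructor
  · rintro ⟨hinv, a, b, h⟩
    have hb := h.val_eq_succ
    have hp := h.eq_revPerm_mul_swap
    exact ⟨a, b, hb, (revPerm_mul_swap_inv_eq_self_iff hb).mp (hp ▸ hinv), hp⟩
  · rintro ⟨a, b, hb, hrev, rfl⟩
    exact ⟨(revPerm_mul_swap_inv_eq_self_iff hb).mpr hrev, a, b,
      isUniqueNoninversion_revPerm_mul_swap hb⟩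

/-- `i_1(123) = 1`, `i_n(123) = 1` for even `n ≥ 2`, and `i_n(123) = 0` for odd
`n ≥ 3`. -/
theorem i123_values :
    iNum pattern123 1 = 1 ∧
    (∀ n : ℕ, 2 ≤ n → Even n → iNum pattern123 n = 1) ∧
    (∀ n : ℕ, 3 ≤ n → Odd n → iNum pattern123 n = 0) := by
  refine ⟨iNum_one pattern123 (by norm_num), fun n hn heven => ?_, fun n hn hodd => ?_⟩
  · have hhalf : n = 2 * (n / 2 - 1) + 2 := by obtain ⟨m, rfl⟩ := heven; omega
    let a : Fin n := ⟨n / 2 - 1, by omega⟩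
    let b : Fin n := ⟨n / 2, by omega⟩
    rw [iNum, Nat.card_eq_one_iff_exists]
    refine ⟨⟨Fin.revPerm * Equiv.swap a b, (involution_avoids123_hasULIS_iff hn).mpr
      ⟨a, b, by simp only [a, b]; omega, hhalf, rfl⟩⟩, ?_⟩
    rintro ⟨p, hp⟩
    obtain ⟨c, d, hd, hc, rfl⟩ := (involution_avoids123_hasULIS_iff hn).mp hp
    obtain ⟨rfl, rfl⟩ : c = a ∧ d = b :=
      ⟨Fin.ext (by simp only [a]; omega), Fin.ext (by simp only [b]; omega)⟩
    rfl
  · rw [iNum, Nat.card_eq_zero]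
    refine Or.inl ⟨fun ⟨p, hp⟩ => ?_⟩
    obtain ⟨a, b, -, ha, -⟩ := (involution_avoids123_hasULIS_iff (by omega)).mp hp
    obtain ⟨m, rfl⟩ := hodd
    omega
end

section
/- Let m be a positive integer and let p be a 321-avoiding permutation of length 2m whose longest increasing subsequence has length m (i.e., p has Robinson–Schensted shape (m,m)). Then f(p), the image of p under the Claesson–Kitaev map, has a unique longest increasing subsequence, namely the sequence of its m+1 left-to-right maxima. -/
/-- The one-line word of a permutation, with entries in `{1, …, n}`. -/
def wordOf {n : ℕ} (p : Equiv.Perm (Fin n)) : List ℕ :=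
  List.ofFn (fun i => (p i : ℕ) + 1)

/-- The entry of the word `w` at (0-based) position `i`. -/
def entry (w : List ℕ) (i : ℕ) : ℕ := w.getD i 0

/-- The entry at position `i` of `w` is a left-to-right maximum. -/
def LTRMaxAt (w : List ℕ) (i : ℕ) : Prop :=
  i < w.length ∧ ∀ j, j < i → entry w j < entry w i

/-- The entry at position `i` of `w` is a right-to-left minimum. -/
def RTLMinAt (w : List ℕ) (i : ℕ) : Prop :=
  i < w.length ∧ ∀ j, i < j → j < w.length → entry w i < entry w j

/-- The set of "underlined" values for the Claesson–Kitaev map: the left-to-right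
maxima lying strictly to the right of the entry `1` that are not right-to-left
minima, together with the newly inserted maximum value `n + 1`. -/
def ckS (w : List ℕ) : Set ℕ :=
  {v | ∃ i, entry w i = v ∧ LTRMaxAt w i ∧ ¬ RTLMinAt w i ∧ w.idxOf 1 < i}
    ∪ {w.length + 1}

open Classical in
/-- The value substitution realizing the cyclic left shift of the underlined values:
each underlined value is replaced by the next larger underlined value, the largest
underlined value being replaced by the smallest one; other values are unchanged. -/
noncomputable def ckSubst (S : Set ℕ) (v : ℕ) : ℕ :=
  if v ∈ S then (if {u ∈ S | v < u}.Nonempty then sInf {u ∈ S | v < u} else sInf S)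
  else v

/-- The Claesson–Kitaev map on words: insert the new maximum value `n + 1`
immediately to the left of the entry `1`, then cyclically shift the underlined
values one position to the left among the underlined positions. -/
noncomputable def ckMap (w : List ℕ) : List ℕ :=
  ((w.take (w.idxOf 1)) ++ (w.length + 1) :: (w.drop (w.idxOf 1))).map
    (ckSubst (ckS w))

/-- `s` is the index set of an increasing subsequence of the word `w`. -/
def WIsInc (w : List ℕ) (s : Finset ℕ) : Prop :=
  (∀ i ∈ s, i < w.length) ∧ ∀ i ∈ s, ∀ j ∈ s, i < j → entry w i < entry w j


/-!
In a 321-avoiding word of shape `(m, m)` the left-to-right maxima and the remaining entries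
form two increasing subsequences of length `m`. Call the length of a longest increasing
subsequence ending at a position its level: each level `1, …, m` is taken by exactly one
maximum and one other entry, and the other entry lies to the right of the maximum and below it.
In particular no maximum is a right-to-left minimum, and the maxima right of the entry `1`
are those of level above its position. The map raises each of them to the value of the maximum
of the next level (the last one to the new maximum), and the new entry gets the value of the
first one. So the maxima of `f(p)` are the new entry and the images of the maxima of `p`, and
deleting the new entry turns increasing subsequences of `f(p)` into increasing ones of `p`,
which bounds them by `m + 1`. One of length `m + 1` passes through the new entry and meets
every level of `p` once; its leftmost non-maximum would lie below the raised value of the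
maximum one level down.
-/

open Finset

theorem entry_map {w : List ℕ} {i : ℕ} (f : ℕ → ℕ) (hi : i < w.length) :
    entry (w.map f) i = f (entry w i) := by
  simp [entry, List.getD_eq_getElem?_getD, List.getElem?_eq_getElem hi]

theorem entry_take_append_cons_drop {w : List ℕ} {z : ℕ} (a : ℕ) (hz : z ≤ w.length) (i : ℕ) :
    entry (w.take z ++ a :: w.drop z) i =
      if i < z then entry w i else if i = z then a else entry w (i - 1) := by
  have hlen : (w.take z).length = z := List.length_take_of_le hz
  simp only [entry, List.getD_eq_getElem?_getD]
  split_ifs with h1 h2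
  · rw [List.getElem?_append_left (by omega), List.getElem?_take_of_lt h1]
  · subst h2; simp [hlen]
  · obtain ⟨k, rfl⟩ : ∃ k, i = z + k + 1 := ⟨i - z - 1, by omega⟩
    rw [List.getElem?_append_right (by omega), hlen, show z + k + 1 - z = k + 1 by omega,
      List.getElem?_cons_succ, List.getElem?_drop, show z + k + 1 - 1 = z + k by omega]

section Words

variable {w : List ℕ}

theorem WIsInc.insert {s : Finset ℕ} {j : ℕ} (hs : WIsInc w s) (hj : j < w.length)
    (hlt : ∀ i ∈ s, i < j ∧ entry w i < entry w j) : WIsInc w (insert j s) := by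
  refine ⟨fun i hi => ?_, fun a ha b hb hab => ?_⟩
  · rcases mem_insert.mp hi with rfl | hi
    exacts [hj, hs.1 i hi]
  · rcases mem_insert.mp ha with ha | ha <;> rcases mem_insert.mp hb with hb | hb
    · omega
    · exact absurd (hlt b hb).1 (by omega)
    · exact hb ▸ (hlt a ha).2
    · exact hs.2 a ha b hb hab

theorem WIsInc.subset {s t : Finset ℕ} (ht : WIsInc w t) (hst : s ⊆ t) : WIsInc w s :=
  ⟨fun i hi => ht.1 i (hst hi), fun i hi j hj => ht.2 i (hst hi) j (hst hj)⟩

open Classical in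
noncomputable def ltrMaxima (w : List ℕ) : Finset ℕ :=
  (range w.length).filter (fun i => LTRMaxAt w i)

open Classical in
noncomputable def nonMaxima (w : List ℕ) : Finset ℕ :=
  (range w.length).filter (fun i => ¬ LTRMaxAt w i)

theorem mem_ltrMaxima {i : ℕ} : i ∈ ltrMaxima w ↔ LTRMaxAt w i := by
  simpa [ltrMaxima] using fun h => h.1

theorem mem_nonMaxima {i : ℕ} : i ∈ nonMaxima w ↔ i < w.length ∧ ¬ LTRMaxAt w i := by
  simp [nonMaxima]

theorem card_ltrMaxima_add_card_nonMaxima (w : List ℕ) :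
    (ltrMaxima w).card + (nonMaxima w).card = w.length := by
  rw [ltrMaxima, nonMaxima, card_filter_add_card_filter_not, card_range]

theorem wIsInc_ltrMaxima (w : List ℕ) : WIsInc w (ltrMaxima w) :=
  ⟨fun _ hi => (mem_ltrMaxima.mp hi).1, fun i _ _ hj hij => (mem_ltrMaxima.mp hj).2 i hij⟩

open Classical in
noncomputable def incEndingAt (w : List ℕ) (i : ℕ) : Finset (Finset ℕ) :=
  (range (i + 1)).powerset.filter fun s => WIsInc w s ∧ i ∈ s

theorem mem_incEndingAt {s : Finset ℕ} {i : ℕ} :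
    s ∈ incEndingAt w i ↔ WIsInc w s ∧ i ∈ s ∧ ∀ j ∈ s, j ≤ i := by
  simp only [incEndingAt, mem_filter, mem_powerset, subset_iff, mem_range, Nat.lt_succ_iff]
  tauto

noncomputable def level (w : List ℕ) (i : ℕ) : ℕ :=
  (incEndingAt w i).sup card

theorem card_le_level {s : Finset ℕ} {i : ℕ} (hs : WIsInc w s) (hi : i ∈ s)
    (hle : ∀ j ∈ s, j ≤ i) : s.card ≤ level w i :=
  le_sup (mem_incEndingAt.mpr ⟨hs, hi, hle⟩)

theorem exists_card_eq_level {i : ℕ} (hi : i < w.length) :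
    ∃ s, WIsInc w s ∧ i ∈ s ∧ (∀ j ∈ s, j ≤ i) ∧ s.card = level w i := by
  have hsingle : {i} ∈ incEndingAt w i :=
    mem_incEndingAt.mpr ⟨⟨by simpa using hi, by simp⟩, mem_singleton_self i, by simp⟩
  obtain ⟨s, hs, hsup⟩ := exists_mem_eq_sup _ ⟨_, hsingle⟩ card
  obtain ⟨hinc, his, hle⟩ := mem_incEndingAt.mp hs
  exact ⟨s, hinc, his, hle, hsup.symm⟩

theorem one_le_level {i : ℕ} (hi : i < w.length) : 1 ≤ level w i := by
  obtain ⟨s, -, his, -, hcard⟩ := exists_card_eq_level hi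
  exact hcard ▸ card_pos.mpr ⟨i, his⟩

theorem level_le_succ (w : List ℕ) (i : ℕ) : level w i ≤ i + 1 :=
  Finset.sup_le fun s hs => by
    simpa using card_le_card (s := s) (t := range (i + 1))
      fun j hj => mem_range.mpr (Nat.lt_succ_of_le ((mem_incEndingAt.mp hs).2.2 j hj))

theorem level_lt_level {i j : ℕ} (hij : i < j) (hj : j < w.length)
    (hv : entry w i < entry w j) : level w i < level w j := by
  obtain ⟨s, hs, his, hle, hcard⟩ := exists_card_eq_level (hij.trans hj)
  have hlt : ∀ k ∈ s, k < j ∧ entry w k < entry w j := fun k hk =>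
    ⟨(hle k hk).trans_lt hij, (hle k hk).eq_or_lt.elim (fun h => h ▸ hv)
      fun h => (hs.2 k hk i his h).trans hv⟩
  have := card_le_level (hs.insert hj hlt) (mem_insert_self j s)
    (fun k hk => (mem_insert.mp hk).elim le_of_eq fun hk => (hlt k hk).1.le)
  rw [card_insert_of_notMem fun h => (hlt j h).1.false] at this
  omega

theorem WIsInc.strictMonoOn_level {s : Finset ℕ} (hs : WIsInc w s) :
    StrictMonoOn (level w) s := fun _ hi _ hj hij =>
  level_lt_level hij (hs.1 _ hj) (hs.2 _ hi _ hj hij)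

theorem eq_of_ltrMaxAt_of_level_eq {i j : ℕ} (hi : LTRMaxAt w i) (hj : LTRMaxAt w j)
    (h : level w i = level w j) : i = j :=
  (wIsInc_ltrMaxima w).strictMonoOn_level.injOn (mem_ltrMaxima.mpr hi) (mem_ltrMaxima.mpr hj) h

end Words

theorem ckSubst_of_notMem {S : Set ℕ} {v : ℕ} (h : v ∉ S) : ckSubst S v = v := by
  rw [ckSubst, if_neg h]

theorem ckSubst_image_Ioc {f : ℕ → ℕ} {a b t : ℕ} (hf : StrictMonoOn f (Set.Ioc a b))
    (ht : t ∈ Set.Ioc a b) :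
    ckSubst (f '' Set.Ioc a b) (f t) = if t < b then f (t + 1) else f (a + 1) := by
  have sInf_image : ∀ c, a ≤ c → c < b → sInf (f '' Set.Ioc c b) = f (c + 1) := fun c hac hcb =>
    ((hf.monotoneOn.mono (Set.Ioc_subset_Ioc_left hac)).map_isLeast
      ⟨⟨by omega, by omega⟩, fun x hx => hx.1⟩).csInf_eq
  have above : {u ∈ f '' Set.Ioc a b | f t < u} = f '' Set.Ioc t b := by
    ext u
    simp only [Set.mem_ofPred_eq, Set.mem_image, Set.mem_Ioc]
    constructor
    · rintro ⟨⟨s, hs, rfl⟩, hts⟩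
      exact ⟨s, ⟨(hf.lt_iff_lt ht hs).mp hts, hs.2⟩, rfl⟩
    · rintro ⟨s, hs, rfl⟩
      exact ⟨⟨s, ⟨ht.1.trans hs.1, hs.2⟩, rfl⟩, hf ht ⟨ht.1.trans hs.1, hs.2⟩ hs.1⟩
  rw [ckSubst, if_pos (Set.mem_image_of_mem f ht), above]
  by_cases htb : t < b
  · rw [if_pos ⟨f (t + 1), t + 1, ⟨by omega, htb⟩, rfl⟩, if_pos htb, sInf_image t ht.1.le htb]
  · rw [if_neg (by rintro ⟨_, s, hs, -⟩; exact htb (hs.1.trans_le hs.2)), if_neg htb,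
      sInf_image a le_rfl (ht.1.trans_le ht.2)]

/-- `skipPos (w.idxOf 1) k` is the position in `ckMap w` of the entry at position `k` of `w`. -/
def skipPos (z k : ℕ) : ℕ := if k < z then k else k + 1

theorem skipPos_injective (z : ℕ) : Function.Injective (skipPos z) := fun a b h => by
  unfold skipPos at h; split_ifs at h <;> omega

theorem skipPos_lt_skipPos_iff {z a b : ℕ} : skipPos z a < skipPos z b ↔ a < b := by
  unfold skipPos; split_ifs <;> omega

theorem skipPos_ne (z k : ℕ) : skipPos z k ≠ z := by
  unfold skipPos; split_ifs <;> omega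

theorem exists_skipPos_eq {z i : ℕ} (h : i ≠ z) : ∃ k, skipPos z k = i :=
  ⟨if i < z then i else i - 1, by unfold skipPos; split_ifs <;> omega⟩

theorem skipPos_lt_succ_iff {z n k : ℕ} (hz : z ≤ n) : skipPos z k < n + 1 ↔ k < n := by
  unfold skipPos; split_ifs <;> omega

theorem skipPos_lt_iff {z k : ℕ} : skipPos z k < z ↔ k < z := by
  unfold skipPos; split_ifs <;> omega

theorem lt_skipPos_iff {z k : ℕ} : z < skipPos z k ↔ z ≤ k := by
  unfold skipPos; split_ifs <;> omega

noncomputable def skipPosPreimage (z : ℕ) (s : Finset ℕ) : Finset ℕ :=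
  s.preimage (skipPos z) (skipPos_injective z).injOn

theorem mem_skipPosPreimage {z k : ℕ} {s : Finset ℕ} :
    k ∈ skipPosPreimage z s ↔ skipPos z k ∈ s :=
  mem_preimage

theorem image_skipPosPreimage (z : ℕ) (s : Finset ℕ) :
    (skipPosPreimage z s).image (skipPos z) = s.erase z := by
  ext i
  simp only [mem_image, mem_skipPosPreimage, mem_erase]
  constructor
  · rintro ⟨k, hk, rfl⟩
    exact ⟨skipPos_ne z k, hk⟩
  · rintro ⟨hiz, hi⟩
    obtain ⟨k, rfl⟩ := exists_skipPos_eq hiz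
    exact ⟨k, hi, rfl⟩

theorem card_skipPosPreimage (z : ℕ) (s : Finset ℕ) :
    (skipPosPreimage z s).card = (s.erase z).card := by
  rw [← image_skipPosPreimage, card_image_of_injective _ (skipPos_injective z)]

theorem length_ckMap (w : List ℕ) : (ckMap w).length = w.length + 1 := by
  have := List.idxOf_le_length (a := 1) (l := w)
  simp [ckMap]; omega

theorem entry_ckMap_idxOf (w : List ℕ) :
    entry (ckMap w) (w.idxOf 1) = ckSubst (ckS w) (w.length + 1) := by
  rw [ckMap, entry_map _ (by have := List.idxOf_le_length (a := 1) (l := w); simp; omega),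
    entry_take_append_cons_drop _ List.idxOf_le_length, if_neg (lt_irrefl _), if_pos rfl]

theorem entry_ckMap_skipPos {w : List ℕ} {k : ℕ} (hk : k < w.length) :
    entry (ckMap w) (skipPos (w.idxOf 1) k) = ckSubst (ckS w) (entry w k) := by
  rw [ckMap, entry_map _ (by unfold skipPos; simp; split_ifs <;> omega),
    entry_take_append_cons_drop _ List.idxOf_le_length]
  unfold skipPos
  split_ifs <;> first | rfl | omega

/-- The word of a 321-avoiding permutation of `{1, …, 2m}` with no increasing subsequence
longer than `m`, i.e. of Robinson–Schensted shape `(m, m)`. -/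
structure IsTwoRowWord (m : ℕ) (w : List ℕ) : Prop where
  length_eq : w.length = 2 * m
  entry_injOn : ∀ i < 2 * m, ∀ j < 2 * m, entry w i = entry w j → i = j
  one_le_entry : ∀ i < 2 * m, 1 ≤ entry w i
  entry_le : ∀ i < 2 * m, entry w i ≤ 2 * m
  one_mem : 1 ∈ w
  avoids321 : ∀ i j k, i < j → j < k → k < 2 * m →
    ¬ (entry w j < entry w i ∧ entry w k < entry w j)
  card_le : ∀ s, WIsInc w s → s.card ≤ m

noncomputable def maxOfLevel (w : List ℕ) (t : ℕ) : ℕ :=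
  Classical.epsilon fun i => LTRMaxAt w i ∧ level w i = t

/-- For `w.idxOf 1 < t ≤ m + 1` these are the values underlined by the Claesson–Kitaev map,
in increasing order: the maximum of level `t` for `t ≤ m`, then the new maximum `2m + 1`. -/
noncomputable def underlined (m : ℕ) (w : List ℕ) (t : ℕ) : ℕ :=
  if t ≤ m then entry w (maxOfLevel w t) else 2 * m + 1

namespace IsTwoRowWord

variable {m : ℕ} {w : List ℕ}

theorem entry_lt_or_gt (hw : IsTwoRowWord m w) {i j : ℕ} (hi : i < 2 * m) (hj : j < 2 * m)
    (hij : i ≠ j) : entry w i < entry w j ∨ entry w j < entry w i :=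
  lt_or_gt_of_ne fun h => hij (hw.entry_injOn i hi j hj h)

theorem exists_entry_lt_of_not_ltrMaxAt (hw : IsTwoRowWord m w) {i : ℕ} (hi : i < 2 * m)
    (hni : ¬ LTRMaxAt w i) : ∃ k < i, entry w i < entry w k := by
  obtain ⟨k, hki, hk⟩ : ∃ k < i, entry w i ≤ entry w k := by
    simpa [LTRMaxAt, hw.length_eq, hi] using hni
  exact ⟨k, hki, hk.lt_of_ne fun h => hki.ne (hw.entry_injOn k (hki.trans hi) i hi h.symm)⟩

theorem wIsInc_nonMaxima (hw : IsTwoRowWord m w) : WIsInc w (nonMaxima w) := by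
  refine ⟨fun i hi => (mem_nonMaxima.mp hi).1, fun i hi j hj hij => ?_⟩
  obtain ⟨hi, hni⟩ := mem_nonMaxima.mp hi
  obtain ⟨hj, -⟩ := mem_nonMaxima.mp hj
  rw [hw.length_eq] at hi hj
  obtain ⟨k, hki, hk⟩ := hw.exists_entry_lt_of_not_ltrMaxAt hi hni
  exact (hw.entry_lt_or_gt hi hj hij.ne).resolve_right fun hji =>
    hw.avoids321 k i j hki hij hj ⟨hk, hji⟩

theorem card_ltrMaxima (hw : IsTwoRowWord m w) : (ltrMaxima w).card = m := by
  have := card_ltrMaxima_add_card_nonMaxima w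
  have := hw.length_eq
  have := hw.card_le _ (wIsInc_ltrMaxima w)
  have := hw.card_le _ hw.wIsInc_nonMaxima
  omega

theorem card_nonMaxima (hw : IsTwoRowWord m w) : (nonMaxima w).card = m := by
  have := card_ltrMaxima_add_card_nonMaxima w
  have := hw.length_eq
  have := hw.card_ltrMaxima
  omega

theorem level_le (hw : IsTwoRowWord m w) {i : ℕ} (hi : i < 2 * m) : level w i ≤ m := by
  obtain ⟨s, hs, -, -, hcard⟩ := exists_card_eq_level (hw.length_eq ▸ hi)
  exact hcard ▸ hw.card_le s hs

theorem exists_mem_level_eq (hw : IsTwoRowWord m w) {s : Finset ℕ} (hs : WIsInc w s)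
    (hcard : s.card = m) {t : ℕ} (ht : t ∈ Icc 1 m) : ∃ i ∈ s, level w i = t := by
  have hlen : ∀ i ∈ s, i < 2 * m := fun i hi => hw.length_eq ▸ hs.1 i hi
  have himage : s.image (level w) = Icc 1 m := by
    refine eq_of_subset_of_card_le (fun t ht => ?_) ?_
    · obtain ⟨i, hi, rfl⟩ := mem_image.mp ht
      exact mem_Icc.mpr ⟨one_le_level (hs.1 i hi), hw.level_le (hlen i hi)⟩
    · rw [card_image_of_injOn hs.strictMonoOn_level.injOn, hcard, Nat.card_Icc]
      omega
  rw [← himage] at ht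
  exact mem_image.mp ht

theorem entry_lt_of_level_eq (hw : IsTwoRowWord m w) {i j : ℕ} (hij : i < j)
    (hj : j < 2 * m) (h : level w i = level w j) : entry w j < entry w i :=
  (hw.entry_lt_or_gt (hij.trans hj) hj hij.ne).resolve_left fun hv =>
    (level_lt_level hij (hw.length_eq ▸ hj) hv).ne h

theorem lt_and_entry_lt_of_level_eq (hw : IsTwoRowWord m w) {i x : ℕ} (hi : LTRMaxAt w i)
    (hx : x < 2 * m) (hnx : ¬ LTRMaxAt w x) (h : level w x = level w i) :
    i < x ∧ entry w x < entry w i := by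
  have hix : i < x := by
    refine lt_of_le_of_ne (not_lt.mp fun hxi => ?_) fun hix => hnx (hix ▸ hi)
    exact (level_lt_level hxi hi.1 (hi.2 x hxi)).ne h
  exact ⟨hix, hw.entry_lt_of_level_eq hix hx h.symm⟩

theorem not_rtlMinAt (hw : IsTwoRowWord m w) {i : ℕ} (hi : LTRMaxAt w i) : ¬ RTLMinAt w i := by
  intro hmin
  have hi' : i < 2 * m := hw.length_eq ▸ hi.1
  obtain ⟨x, hx, hlevel⟩ := hw.exists_mem_level_eq hw.wIsInc_nonMaxima hw.card_nonMaxima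
    (mem_Icc.mpr ⟨one_le_level hi.1, hw.level_le hi'⟩)
  obtain ⟨hxlen, hnx⟩ := mem_nonMaxima.mp hx
  obtain ⟨hix, hxi⟩ := hw.lt_and_entry_lt_of_level_eq hi (hw.length_eq ▸ hxlen) hnx hlevel
  exact (hmin.2 x hix hxlen).not_gt hxi

theorem maxOfLevel_spec (hw : IsTwoRowWord m w) {t : ℕ} (ht : t ∈ Icc 1 m) :
    LTRMaxAt w (maxOfLevel w t) ∧ level w (maxOfLevel w t) = t := by
  obtain ⟨i, hi, hlevel⟩ := hw.exists_mem_level_eq (wIsInc_ltrMaxima w) hw.card_ltrMaxima ht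
  exact Classical.epsilon_spec (p := fun i => LTRMaxAt w i ∧ level w i = t)
    ⟨i, mem_ltrMaxima.mp hi, hlevel⟩

theorem maxOfLevel_level (hw : IsTwoRowWord m w) {j : ℕ} (hj : LTRMaxAt w j) :
    maxOfLevel w (level w j) = j := by
  have ht : level w j ∈ Icc 1 m :=
    mem_Icc.mpr ⟨one_le_level hj.1, hw.level_le (hw.length_eq ▸ hj.1)⟩
  exact eq_of_ltrMaxAt_of_level_eq (hw.maxOfLevel_spec ht).1 hj (hw.maxOfLevel_spec ht).2

theorem strictMonoOn_entry_maxOfLevel (hw : IsTwoRowWord m w) :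
    StrictMonoOn (fun t => entry w (maxOfLevel w t)) (Icc 1 m : Set ℕ) := by
  intro s hs t ht hst
  obtain ⟨hsmax, hslevel⟩ := hw.maxOfLevel_spec (mem_coe.mp hs)
  obtain ⟨htmax, htlevel⟩ := hw.maxOfLevel_spec (mem_coe.mp ht)
  refine htmax.2 _ (((wIsInc_ltrMaxima w).strictMonoOn_level.lt_iff_lt ?_ ?_).mp ?_)
  · exact mem_ltrMaxima.mpr hsmax
  · exact mem_ltrMaxima.mpr htmax
  · rwa [hslevel, htlevel]

theorem idxOf_lt (hw : IsTwoRowWord m w) : w.idxOf 1 < 2 * m :=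
  hw.length_eq ▸ List.idxOf_lt_length_iff.mpr hw.one_mem

theorem entry_idxOf (hw : IsTwoRowWord m w) : entry w (w.idxOf 1) = 1 := by
  rw [entry, List.getD_eq_getElem _ _ (hw.length_eq ▸ hw.idxOf_lt)]
  exact List.getElem_idxOf _

theorem ltrMaxAt_of_lt_idxOf (hw : IsTwoRowWord m w) {i : ℕ} (hi : i < w.idxOf 1) :
    LTRMaxAt w i := by
  have hz := hw.idxOf_lt
  refine ⟨by rw [hw.length_eq]; omega, fun j hji => ?_⟩
  have h1 : 1 < entry w i := (hw.one_le_entry i (by omega)).lt_of_ne fun h =>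
    hi.ne (hw.entry_injOn i (by omega) _ hz (h.symm.trans hw.entry_idxOf.symm))
  refine ((hw.entry_lt_or_gt (by omega) (by omega) hji.ne).resolve_right fun hij => ?_)
  exact hw.avoids321 j i _ hji hi hz ⟨hij, by rw [hw.entry_idxOf]; exact h1⟩

theorem idxOf_le (hw : IsTwoRowWord m w) : w.idxOf 1 ≤ m := by
  have := card_le_card (s := range (w.idxOf 1)) (t := ltrMaxima w) fun i hi =>
    mem_ltrMaxima.mpr (hw.ltrMaxAt_of_lt_idxOf (mem_range.mp hi))
  rwa [card_range, hw.card_ltrMaxima] at this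

theorem not_ltrMaxAt_idxOf (hw : IsTwoRowWord m w) : ¬ LTRMaxAt w (w.idxOf 1) := by
  intro hz
  obtain ⟨x, hx, hlevel⟩ := hw.exists_mem_level_eq hw.wIsInc_nonMaxima hw.card_nonMaxima
    (mem_Icc.mpr ⟨one_le_level hz.1, hw.level_le hw.idxOf_lt⟩)
  obtain ⟨hxlen, hnx⟩ := mem_nonMaxima.mp hx
  have := (hw.lt_and_entry_lt_of_level_eq hz (hw.length_eq ▸ hxlen) hnx hlevel).2
  have := hw.one_le_entry x (hw.length_eq ▸ hxlen)
  rw [hw.entry_idxOf] at *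
  omega

/-- The entries left of `1` are maxima, so a maximum right of `1` extends them. -/
theorem idxOf_lt_iff_lt_level (hw : IsTwoRowWord m w) {j : ℕ} (hj : LTRMaxAt w j) :
    w.idxOf 1 < j ↔ w.idxOf 1 < level w j := by
  constructor
  · intro hzj
    have hinc : WIsInc w (insert j (range (w.idxOf 1))) :=
      ((wIsInc_ltrMaxima w).subset fun i hi =>
        mem_ltrMaxima.mpr (hw.ltrMaxAt_of_lt_idxOf (mem_range.mp hi))).insert hj.1
        fun i hi => ⟨(mem_range.mp hi).trans hzj, hj.2 i ((mem_range.mp hi).trans hzj)⟩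
    have := card_le_level hinc (mem_insert_self _ _) fun i hi =>
      (mem_insert.mp hi).elim le_of_eq fun hi => ((mem_range.mp hi).trans hzj).le
    rw [card_insert_of_notMem (by simp; omega), card_range] at this
    omega
  · intro hlevel
    have := level_le_succ w j
    have : j ≠ w.idxOf 1 := fun h => hw.not_ltrMaxAt_idxOf (h ▸ hj)
    omega

theorem underlined_level (hw : IsTwoRowWord m w) {j : ℕ} (hj : LTRMaxAt w j) :
    underlined m w (level w j) = entry w j := by
  rw [underlined, if_pos (hw.level_le (hw.length_eq ▸ hj.1)), hw.maxOfLevel_level hj]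

theorem strictMonoOn_underlined (hw : IsTwoRowWord m w) :
    StrictMonoOn (underlined m w) (Set.Ioc (w.idxOf 1) (m + 1)) := by
  intro s hs t ht hst
  simp only [Set.mem_Ioc] at hs ht
  have hsm : s ≤ m := by omega
  have hsmax := (hw.maxOfLevel_spec (mem_Icc.mpr ⟨by omega, hsm⟩)).1
  simp only [underlined, if_pos hsm]
  split_ifs with htm
  · exact hw.strictMonoOn_entry_maxOfLevel (by simp; omega) (by simp; omega) hst
  · have := hw.entry_le _ (hw.length_eq ▸ hsmax.1)
    omega

theorem ckS_eq (hw : IsTwoRowWord m w) :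
    ckS w = underlined m w '' Set.Ioc (w.idxOf 1) (m + 1) := by
  ext v
  simp only [ckS, Set.mem_union, Set.mem_ofPred_eq, Set.mem_singleton_iff, Set.mem_image,
    Set.mem_Ioc, hw.length_eq]
  constructor
  · rintro (⟨j, rfl, hj, -, hzj⟩ | rfl)
    · refine ⟨level w j, ⟨(hw.idxOf_lt_iff_lt_level hj).mp hzj, ?_⟩, hw.underlined_level hj⟩
      have := hw.level_le (hw.length_eq ▸ hj.1)
      omega
    · exact ⟨m + 1, ⟨Nat.lt_succ_of_le hw.idxOf_le, le_rfl⟩, by simp [underlined]⟩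
  · rintro ⟨t, ⟨hzt, htm⟩, rfl⟩
    by_cases ht : t ≤ m
    · obtain ⟨hmax, hlevel⟩ := hw.maxOfLevel_spec (mem_Icc.mpr ⟨by omega, ht⟩)
      refine Or.inl ⟨_, (if_pos ht).symm, hmax, hw.not_rtlMinAt hmax, ?_⟩
      exact (hw.idxOf_lt_iff_lt_level hmax).mpr (by rw [hlevel]; exact hzt)
    · exact Or.inr (if_neg ht)

theorem level_mem_Ioc (hw : IsTwoRowWord m w) {j : ℕ} (hj : LTRMaxAt w j)
    (hzj : w.idxOf 1 < j) : level w j ∈ Set.Ioc (w.idxOf 1) m :=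
  ⟨(hw.idxOf_lt_iff_lt_level hj).mp hzj, hw.level_le (hw.length_eq ▸ hj.1)⟩

theorem ckSubst_underlined (hw : IsTwoRowWord m w) {t : ℕ} (ht : t ∈ Set.Ioc (w.idxOf 1) m) :
    ckSubst (ckS w) (underlined m w t) = underlined m w (t + 1) := by
  obtain ⟨hzt, htm⟩ := ht
  rw [hw.ckS_eq, ckSubst_image_Ioc hw.strictMonoOn_underlined ⟨hzt, by omega⟩,
    if_pos (by omega)]

theorem entry_ckMap_idxOf_eq (hw : IsTwoRowWord m w) :
    entry (ckMap w) (w.idxOf 1) = underlined m w (w.idxOf 1 + 1) := by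
  have htop : w.length + 1 = underlined m w (m + 1) := by simp [underlined, hw.length_eq]
  rw [entry_ckMap_idxOf, htop, hw.ckS_eq, ckSubst_image_Ioc hw.strictMonoOn_underlined
    ⟨Nat.lt_succ_of_le hw.idxOf_le, le_rfl⟩, if_neg (lt_irrefl _)]

theorem entry_ckMap_skipPos_of_underlined (hw : IsTwoRowWord m w) {j : ℕ} (hj : LTRMaxAt w j)
    (hzj : w.idxOf 1 < j) :
    entry (ckMap w) (skipPos (w.idxOf 1) j) = underlined m w (level w j + 1) := by
  rw [entry_ckMap_skipPos hj.1, ← hw.underlined_level hj,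
    hw.ckSubst_underlined (hw.level_mem_Ioc hj hzj)]

theorem entry_ckMap_skipPos_of_not_underlined (hw : IsTwoRowWord m w) {j : ℕ} (hj : j < 2 * m)
    (hnj : ¬ (LTRMaxAt w j ∧ w.idxOf 1 < j)) :
    entry (ckMap w) (skipPos (w.idxOf 1) j) = entry w j := by
  rw [entry_ckMap_skipPos (hw.length_eq ▸ hj), ckSubst_of_notMem]
  rintro (⟨i, hij, hi, -, hzi⟩ | hv)
  · exact hnj (hw.entry_injOn i (hw.length_eq ▸ hi.1) j hj hij ▸ ⟨hi, hzi⟩)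
  · have := hw.entry_le j hj
    simp only [Set.mem_singleton_iff, hw.length_eq] at hv
    omega

theorem entry_le_entry_ckMap (hw : IsTwoRowWord m w) {j : ℕ} (hj : j < 2 * m) :
    entry w j ≤ entry (ckMap w) (skipPos (w.idxOf 1) j) := by
  by_cases hu : LTRMaxAt w j ∧ w.idxOf 1 < j
  · obtain ⟨htz, htm⟩ := hw.level_mem_Ioc hu.1 hu.2
    rw [hw.entry_ckMap_skipPos_of_underlined hu.1 hu.2, ← hw.underlined_level hu.1]
    exact (hw.strictMonoOn_underlined ⟨htz, by omega⟩ ⟨by omega, by omega⟩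
      (lt_add_one _)).le
  · rw [hw.entry_ckMap_skipPos_of_not_underlined hj hu]

theorem entry_ckMap_lt_of_ltrMaxAt (hw : IsTwoRowWord m w) {j k : ℕ} (hj : LTRMaxAt w j)
    (hkj : k < j) :
    entry (ckMap w) (skipPos (w.idxOf 1) k) < entry (ckMap w) (skipPos (w.idxOf 1) j) := by
  have hj' : j < 2 * m := hw.length_eq ▸ hj.1
  by_cases hzj : w.idxOf 1 < j
  · obtain ⟨htz, htm⟩ := hw.level_mem_Ioc hj hzj
    have hle : entry (ckMap w) (skipPos (w.idxOf 1) k) ≤ underlined m w (level w j) := by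
      by_cases hu : LTRMaxAt w k ∧ w.idxOf 1 < k
      · obtain ⟨hsz, hsm⟩ := hw.level_mem_Ioc hu.1 hu.2
        rw [hw.entry_ckMap_skipPos_of_underlined hu.1 hu.2]
        exact hw.strictMonoOn_underlined.monotoneOn ⟨by omega, by omega⟩ ⟨htz, by omega⟩
          (level_lt_level hkj hj.1 (hj.2 k hkj))
      · rw [hw.entry_ckMap_skipPos_of_not_underlined (by omega) hu, hw.underlined_level hj]
        exact (hj.2 k hkj).le
    rw [hw.entry_ckMap_skipPos_of_underlined hj hzj]
    exact hle.trans_lt (hw.strictMonoOn_underlined ⟨htz, by omega⟩ ⟨by omega, by omega⟩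
      (lt_add_one _))
  · rw [hw.entry_ckMap_skipPos_of_not_underlined (by omega) fun h => hzj (by omega),
      hw.entry_ckMap_skipPos_of_not_underlined hj' fun h => hzj h.2]
    exact hj.2 k hkj

theorem entry_ckMap_idxOf_lt_of_underlined (hw : IsTwoRowWord m w) {j : ℕ}
    (hj : LTRMaxAt w j) (hzj : w.idxOf 1 < j) :
    entry (ckMap w) (w.idxOf 1) < entry (ckMap w) (skipPos (w.idxOf 1) j) := by
  obtain ⟨htz, htm⟩ := hw.level_mem_Ioc hj hzj
  rw [hw.entry_ckMap_idxOf_eq, hw.entry_ckMap_skipPos_of_underlined hj hzj]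
  exact hw.strictMonoOn_underlined ⟨by omega, by omega⟩ ⟨by omega, by omega⟩ (by omega)

theorem entry_ckMap_lt_entry_ckMap_idxOf (hw : IsTwoRowWord m w) {k : ℕ} (hk : k < w.idxOf 1) :
    entry (ckMap w) (skipPos (w.idxOf 1) k) < entry (ckMap w) (w.idxOf 1) := by
  have hz := hw.idxOf_lt
  rw [hw.entry_ckMap_skipPos_of_not_underlined (by omega) fun h => by omega,
    hw.entry_ckMap_idxOf_eq, underlined]
  split_ifs with h
  · obtain ⟨hmax, hlevel⟩ := hw.maxOfLevel_spec (mem_Icc.mpr ⟨by omega, h⟩)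
    have := (hw.idxOf_lt_iff_lt_level hmax).mpr (by omega)
    exact hmax.2 k (by omega)
  · have := hw.entry_le k (by omega)
    omega

theorem ltrMaxAt_ckMap_iff (hw : IsTwoRowWord m w) {i : ℕ} :
    LTRMaxAt (ckMap w) i ↔ i = w.idxOf 1 ∨ ∃ j, LTRMaxAt w j ∧ skipPos (w.idxOf 1) j = i := by
  have hz := hw.idxOf_lt
  have hlen : (ckMap w).length = 2 * m + 1 := by rw [length_ckMap, hw.length_eq]
  constructor
  · intro hi
    by_contra! h
    obtain ⟨j, rfl⟩ := exists_skipPos_eq h.1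
    have hj : j < 2 * m := (skipPos_lt_succ_iff hz.le).mp (hlen ▸ hi.1)
    have hnj : ¬ LTRMaxAt w j := fun hj => h.2 j hj rfl
    obtain ⟨k, hkj, hk⟩ := hw.exists_entry_lt_of_not_ltrMaxAt hj hnj
    have := hi.2 _ (skipPos_lt_skipPos_iff.mpr hkj)
    rw [hw.entry_ckMap_skipPos_of_not_underlined hj fun h => hnj h.1] at this
    have := hw.entry_le_entry_ckMap (hkj.trans hj)
    omega
  · rintro (rfl | ⟨j, hj, rfl⟩)
    · refine ⟨by omega, fun i hi => ?_⟩
      obtain ⟨k, rfl⟩ := exists_skipPos_eq hi.ne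
      exact hw.entry_ckMap_lt_entry_ckMap_idxOf (skipPos_lt_iff.mp hi)
    · refine ⟨hlen ▸ (skipPos_lt_succ_iff hz.le).mpr (hw.length_eq ▸ hj.1), fun i hi => ?_⟩
      by_cases hiz : i = w.idxOf 1
      · subst hiz
        refine hw.entry_ckMap_idxOf_lt_of_underlined hj ?_
        have := lt_skipPos_iff.mp hi
        exact this.lt_of_ne fun h => hw.not_ltrMaxAt_idxOf (h ▸ hj)
      · obtain ⟨k, rfl⟩ := exists_skipPos_eq hiz
        exact hw.entry_ckMap_lt_of_ltrMaxAt hj (skipPos_lt_skipPos_iff.mp hi)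

theorem ltrMaxima_ckMap (hw : IsTwoRowWord m w) :
    ltrMaxima (ckMap w) = insert (w.idxOf 1) ((ltrMaxima w).image (skipPos (w.idxOf 1))) := by
  ext i
  simp only [mem_ltrMaxima, mem_insert, mem_image, hw.ltrMaxAt_ckMap_iff]

theorem card_ltrMaxima_ckMap (hw : IsTwoRowWord m w) : (ltrMaxima (ckMap w)).card = m + 1 := by
  rw [hw.ltrMaxima_ckMap, card_insert_of_notMem, card_image_of_injective _ (skipPos_injective _),
    hw.card_ltrMaxima]
  simp [skipPos_ne]

theorem entry_lt_of_entry_ckMap_lt (hw : IsTwoRowWord m w) {a b : ℕ} (hb : b < 2 * m)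
    (hab : a < b)
    (h : entry (ckMap w) (skipPos (w.idxOf 1) a) < entry (ckMap w) (skipPos (w.idxOf 1) b)) :
    entry w a < entry w b := by
  refine (hw.entry_lt_or_gt (hab.trans hb) hb hab.ne).resolve_right fun hba => ?_
  by_cases hu : LTRMaxAt w b ∧ w.idxOf 1 < b
  · exact (hu.1.2 a hab).not_gt hba
  · rw [hw.entry_ckMap_skipPos_of_not_underlined hb hu] at h
    exact (hw.entry_le_entry_ckMap (hab.trans hb)).not_gt (h.trans hba)

theorem wIsInc_skipPosPreimage (hw : IsTwoRowWord m w) {s : Finset ℕ}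
    (hs : WIsInc (ckMap w) s) : WIsInc w (skipPosPreimage (w.idxOf 1) s) := by
  have hlt : ∀ k ∈ skipPosPreimage (w.idxOf 1) s, k < 2 * m := fun k hk => by
    have := hs.1 _ (mem_skipPosPreimage.mp hk)
    rwa [length_ckMap, hw.length_eq, skipPos_lt_succ_iff hw.idxOf_lt.le] at this
  refine ⟨fun k hk => hw.length_eq ▸ hlt k hk, fun a ha b hb hab => ?_⟩
  exact hw.entry_lt_of_entry_ckMap_lt (hlt b hb) hab (hs.2 _ (mem_skipPosPreimage.mp ha) _
    (mem_skipPosPreimage.mp hb) (skipPos_lt_skipPos_iff.mpr hab))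

theorem card_le_of_wIsInc_ckMap (hw : IsTwoRowWord m w) {s : Finset ℕ}
    (hs : WIsInc (ckMap w) s) : s.card ≤ m + 1 := by
  have := hw.card_le _ (hw.wIsInc_skipPosPreimage hs)
  rw [card_skipPosPreimage] at this
  have := pred_card_le_card_erase (s := s) (a := w.idxOf 1)
  omega

theorem idxOf_add_one_lt_level (hw : IsTwoRowWord m w) {s : Finset ℕ}
    (hs : WIsInc (ckMap w) s) (hzs : w.idxOf 1 ∈ s) {x : ℕ} (hx : skipPos (w.idxOf 1) x ∈ s)
    (hxlen : x < 2 * m) (hnx : ¬ LTRMaxAt w x) : w.idxOf 1 + 1 < level w x := by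
  set z := w.idxOf 1
  have hzx : z ≤ x := not_lt.mp fun hxz => hnx (hw.ltrMaxAt_of_lt_idxOf hxz)
  have hfirst : underlined m w (z + 1) < entry w x := by
    have := hs.2 z hzs _ hx (lt_skipPos_iff.mpr hzx)
    rwa [hw.entry_ckMap_idxOf_eq, hw.entry_ckMap_skipPos_of_not_underlined hxlen
      fun h => hnx h.1] at this
  have hzm : z + 1 ≤ m := by
    by_contra h
    have := hw.entry_le x hxlen
    rw [underlined, if_neg h] at hfirst
    omega
  have ht : level w x ∈ Icc 1 m :=
    mem_Icc.mpr ⟨one_le_level (hw.length_eq ▸ hxlen), hw.level_le hxlen⟩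
  obtain ⟨htmax, htlevel⟩ := hw.maxOfLevel_spec ht
  have hxt := (hw.lt_and_entry_lt_of_level_eq htmax hxlen hnx htlevel.symm).2
  rw [underlined, if_pos hzm] at hfirst
  exact (hw.strictMonoOn_entry_maxOfLevel.lt_iff_lt (by simp; omega) (by simpa using ht)).mp
    (hfirst.trans hxt)

/-- Were some entry not a maximum, take the leftmost one, `x`, of level `t`. The entry of level
`t - 1` of the subsequence is then a maximum, underlined since `t - 1 > w.idxOf 1`, which `ckMap`
raises to the value of the maximum of level `t`, above `x`. -/
theorem skipPosPreimage_subset_ltrMaxima (hw : IsTwoRowWord m w) {s : Finset ℕ}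
    (hs : WIsInc (ckMap w) s) (hzs : w.idxOf 1 ∈ s)
    (hcard : (skipPosPreimage (w.idxOf 1) s).card = m) :
    skipPosPreimage (w.idxOf 1) s ⊆ ltrMaxima w := by
  have hs' := hw.wIsInc_skipPosPreimage hs
  intro x
  induction x using Nat.strong_induction_on with
  | _ x ih =>
  intro hx
  have hxlen : x < 2 * m := hw.length_eq ▸ hs'.1 x hx
  refine mem_ltrMaxima.mpr (by_contra fun hnx => ?_)
  have hzt := hw.idxOf_add_one_lt_level hs hzs (mem_skipPosPreimage.mp hx) hxlen hnx
  set t := level w x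
  have htm : t ≤ m := hw.level_le hxlen
  obtain ⟨htmax, htlevel⟩ := hw.maxOfLevel_spec (mem_Icc.mpr ⟨by omega, htm⟩)
  have hxt := (hw.lt_and_entry_lt_of_level_eq htmax hxlen hnx htlevel.symm).2
  obtain ⟨y, hy, hylevel⟩ := hw.exists_mem_level_eq hs' hcard (t := t - 1)
    (mem_Icc.mpr ⟨by omega, by omega⟩)
  have hyx : y < x := (hs'.strictMonoOn_level.lt_iff_lt hy hx).mp (by omega)
  have hymax : LTRMaxAt w y := mem_ltrMaxima.mp (ih y hyx hy)
  have hzy : w.idxOf 1 < y := (hw.idxOf_lt_iff_lt_level hymax).mpr (by omega)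
  have := hs.2 _ (mem_skipPosPreimage.mp hy) _ (mem_skipPosPreimage.mp hx)
    (skipPos_lt_skipPos_iff.mpr hyx)
  rw [hw.entry_ckMap_skipPos_of_underlined hymax hzy, hylevel, Nat.sub_add_cancel (by omega),
    hw.entry_ckMap_skipPos_of_not_underlined hxlen fun h => hnx h.1, underlined,
    if_pos htm] at this
  exact this.not_gt hxt

theorem eq_ltrMaxima_ckMap (hw : IsTwoRowWord m w) {s : Finset ℕ} (hs : WIsInc (ckMap w) s)
    (hcard : s.card = m + 1) : s = ltrMaxima (ckMap w) := by
  have hle := hw.card_le _ (hw.wIsInc_skipPosPreimage hs)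
  rw [card_skipPosPreimage] at hle
  have hzs : w.idxOf 1 ∈ s := by
    by_contra h
    rw [erase_eq_of_notMem h] at hle
    omega
  have hcard' : (skipPosPreimage (w.idxOf 1) s).card = m := by
    rw [card_skipPosPreimage, card_erase_of_mem hzs, hcard]
    rfl
  have hmax : skipPosPreimage (w.idxOf 1) s = ltrMaxima w :=
    eq_of_subset_of_card_le (hw.skipPosPreimage_subset_ltrMaxima hs hzs hcard')
      (by rw [hw.card_ltrMaxima, hcard'])
  rw [hw.ltrMaxima_ckMap, ← hmax, image_skipPosPreimage, insert_erase hzs]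

end IsTwoRowWord

theorem length_wordOf {n : ℕ} (p : Equiv.Perm (Fin n)) : (wordOf p).length = n := by
  simp [wordOf]

theorem entry_wordOf {n : ℕ} (p : Equiv.Perm (Fin n)) {i : ℕ} (hi : i < n) :
    entry (wordOf p) i = p ⟨i, hi⟩ + 1 := by
  simp [entry, wordOf, hi]

theorem isTwoRowWord_wordOf {m : ℕ} (hm : 1 ≤ m) (p : Equiv.Perm (Fin (2 * m)))
    (hav : Avoids pattern321 p)
    (hle : ∀ s : Finset (Fin (2 * m)), IsIncSubseq ⇑p s → s.card ≤ m) :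
    IsTwoRowWord m (wordOf p) where
  length_eq := length_wordOf p
  entry_injOn i hi j hj h := by
    rw [entry_wordOf p hi, entry_wordOf p hj, add_left_inj, Fin.val_inj, p.apply_eq_iff_eq] at h
    exact Fin.mk.inj h
  one_le_entry i hi := by simp [entry_wordOf p hi]
  entry_le i hi := by rw [entry_wordOf p hi]; exact (p ⟨i, hi⟩).isLt
  one_mem := List.mem_ofFn.mpr ⟨p.symm ⟨0, by omega⟩, by simp⟩
  avoids321 i j k hij hjk hk := by
    rintro ⟨hji, hkj⟩
    rw [entry_wordOf p (hij.trans (hjk.trans hk)), entry_wordOf p (hjk.trans hk),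
      add_lt_add_iff_right, Fin.val_fin_lt] at hji
    rw [entry_wordOf p (hjk.trans hk), entry_wordOf p hk, add_lt_add_iff_right,
      Fin.val_fin_lt] at hkj
    let f : Fin 3 → Fin (2 * m) := ![⟨i, by omega⟩, ⟨j, by omega⟩, ⟨k, hk⟩]
    have hf : StrictMono f := Fin.strictMono_iff_lt_succ.mpr fun a => by
      fin_cases a <;> simp [f, Fin.lt_def, hij, hjk]
    have hpf : StrictAnti (p ∘ f) := Fin.strictAnti_iff_succ_lt.mpr fun a => by
      fin_cases a <;> simp [f, hji, hkj]
    have hq : StrictAnti pattern321 := by decide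
    exact hav ⟨f, hf, fun a b => hpf.lt_iff_gt.trans hq.lt_iff_gt.symm⟩
  card_le s hs := by
    have hlt : ∀ i ∈ s, i < 2 * m := fun i hi => length_wordOf p ▸ hs.1 i hi
    refine card_attachFin s hlt ▸ hle _ fun i hi j hj hij => ?_
    rw [mem_attachFin] at hi hj
    have := hs.2 i hi j hj hij
    rw [entry_wordOf p (hlt i hi), entry_wordOf p (hlt j hj)] at this
    exact Fin.lt_def.mpr (by simpa using this)

open Classical in
theorem ckMap_hasULIS_general (m : ℕ) (hm : 1 ≤ m)
    (p : Equiv.Perm (Fin (2 * m))) (hav : Avoids pattern321 p)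
    (hle : ∀ s : Finset (Fin (2 * m)), IsIncSubseq ⇑p s → s.card ≤ m) :
    ∀ T : Finset ℕ,
      T = (Finset.range (ckMap (wordOf p)).length).filter
            (fun i => LTRMaxAt (ckMap (wordOf p)) i) →
      (WIsInc (ckMap (wordOf p)) T ∧
        ∀ t : Finset ℕ, WIsInc (ckMap (wordOf p)) t → t.card ≤ T.card) ∧
      T.card = m + 1 ∧
      ∀ s : Finset ℕ, WIsInc (ckMap (wordOf p)) s →
        (∀ t : Finset ℕ, WIsInc (ckMap (wordOf p)) t → t.card ≤ s.card) → s = T := by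
  rintro T rfl
  have hw := isTwoRowWord_wordOf hm p hav hle
  have hcard : (ltrMaxima (ckMap (wordOf p))).card = m + 1 := hw.card_ltrMaxima_ckMap
  refine ⟨⟨wIsInc_ltrMaxima _, fun t ht => ?_⟩, hcard, fun s hs hmax => ?_⟩
  · exact hcard ▸ hw.card_le_of_wIsInc_ckMap ht
  · exact hw.eq_ltrMaxima_ckMap hs
      (le_antisymm (hw.card_le_of_wIsInc_ckMap hs) (hcard ▸ hmax _ (wIsInc_ltrMaxima _)))

open Classical in
/-- If `p` is a 321-avoiding permutation of length `2m` whose longest increasing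
subsequence has length `m`, then `f(p)` has a unique longest increasing subsequence,
namely the sequence of its `m + 1` left-to-right maxima. -/
theorem ckMap_hasULIS (m : ℕ) (hm : 1 ≤ m)
    (p : Equiv.Perm (Fin (2 * m))) (hav : Avoids pattern321 p)
    (hex : ∃ s : Finset (Fin (2 * m)), IsIncSubseq ⇑p s ∧ s.card = m)
    (hle : ∀ s : Finset (Fin (2 * m)), IsIncSubseq ⇑p s → s.card ≤ m) :
    ∀ T : Finset ℕ,
      T = (Finset.range (ckMap (wordOf p)).length).filter
            (fun i => LTRMaxAt (ckMap (wordOf p)) i) →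
      (WIsInc (ckMap (wordOf p)) T ∧
        ∀ t : Finset ℕ, WIsInc (ckMap (wordOf p)) t → t.card ≤ T.card) ∧
      T.card = m + 1 ∧
      ∀ s : Finset ℕ, WIsInc (ckMap (wordOf p)) s →
        (∀ t : Finset ℕ, WIsInc (ckMap (wordOf p)) t → t.card ≤ s.card) → s = T :=
  ckMap_hasULIS_general m hm p hav hle
end
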